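/- arXiv:math/0505132 — 4 statements merged into one kernel-verified Lean document; each statement's English description precedes it below -/
import Mathlib

section
/- Let d ≥ 1 and let i be an integer with 1 ≤ i ≤ (d² + d)/2, and let κ be the unique integer with 1 ≤ κ ≤ d and (κ−1)d − (κ−1)(κ−2)/2 < i ≤ κd − κ(κ−1)/2. Then the lex-smallest element of the degree-d lex segment of colength d + i in x₁, x₂, x₃ (equivalently, the (d+i+1)-th lex-smallest monomial of degree d) is x₁^κ · x₂^{i − (κ−1)d + (κ−1)(κ−2)/2 − 1} · x₃^{κd − κ(κ−1)/2 − i}. -/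
/-!
Degree-`d` monomials with `x₁`-exponent `j` form a lex-interval of `d + 1 - j` elements, so the
lex rank of `x₁^a x₂^b x₃^c` is `b + ∑_{j<a} (d + 1 - j) = b + a(2d + 3 - a)/2`. For the given
exponents this is `d + i`, and since the rank is strictly lex-monotone, the monomial is the
lex-least one of rank at least `d + i`.
-/

/-- Monomials `x₁^a x₂^b x₃^c` of degree `d` in three variables,
encoded as triples `(a, b, c)` with `a + b + c = d`. -/
def MonDeg (d : ℕ) : Set (ℕ × ℕ × ℕ) := {m | m.1 + m.2.1 + m.2.2 = d}

/-- The lexicographic order on monomials with `x₁ > x₂ > x₃`: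
`m < m'` iff `a < a'`, or `a = a'` and `b < b'`. -/
def LexLt (m m' : ℕ × ℕ × ℕ) : Prop :=
  m.1 < m'.1 ∨ (m.1 = m'.1 ∧ m.2.1 < m'.2.1)

/-- The number of degree-`d` monomials lex-smaller than `m`
(so `m` is the `(lexRank d m + 1)`-th lex-smallest degree-`d` monomial). -/
noncomputable def lexRank (d : ℕ) (m : ℕ × ℕ × ℕ) : ℕ :=
  Set.ncard {m' | m' ∈ MonDeg d ∧ LexLt m' m}

/-- The degree-`d` lex segment of colength `h`:
all degree-`d` monomials except the `h` lex-smallest ones. -/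
def LexSeg (d h : ℕ) : Set (ℕ × ℕ × ℕ) := {m | m ∈ MonDeg d ∧ h ≤ lexRank d m}

/-- Divisibility of monomials. -/
def MonDvd (m m' : ℕ × ℕ × ℕ) : Prop :=
  m.1 ≤ m'.1 ∧ m.2.1 ≤ m'.2.1 ∧ m.2.2 ≤ m'.2.2

/-- `m(T)`: the largest index `ℓ ∈ {1, 2, 3}` such that `x_ℓ` divides `T`. -/
def maxVar (m : ℕ × ℕ × ℕ) : ℕ :=
  if 0 < m.2.2 then 3 else if 0 < m.2.1 then 2 else 1

/-- The number of degree-`d` monomials whose `x₁`-exponent is less than `a`. -/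
def lexRowStart (d a : ℕ) : ℕ := ∑ j ∈ Finset.range a, (d + 1 - j)

lemma lexRowStart_succ (d a : ℕ) : lexRowStart d (a + 1) = lexRowStart d a + (d + 1 - a) :=
  Finset.sum_range_succ _ _

lemma lexRowStart_mono (d : ℕ) : Monotone (lexRowStart d) := fun _ _ h =>
  Finset.sum_le_sum_of_subset (Finset.range_subset_range.2 h)

lemma two_mul_lexRowStart {d a : ℕ} (ha : a ≤ d + 1) :
    2 * (lexRowStart d a : ℤ) = a * (2 * d + 3 - a) := by
  induction a with
  | zero => simp [lexRowStart]
  | succ n ih =>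
    rw [lexRowStart_succ, Nat.cast_add, mul_add, ih (by omega), Nat.cast_sub (by omega)]
    push_cast
    ring

lemma setOf_lexLt_eq_biUnion {d a b : ℕ} (c : ℕ) (hab : a + b ≤ d) :
    {m | m ∈ MonDeg d ∧ LexLt m (a, b, c)} =
      ↑((Finset.range (a + 1)).biUnion fun a' =>
        (Finset.range (if a' = a then b else d + 1 - a')).image fun b' => (a', b', d - a' - b')) := by
  ext ⟨x, y, z⟩
  simp only [Set.mem_ofPred_eq, Finset.coe_biUnion, Set.mem_iUnion, Finset.mem_coe,
    Finset.mem_image, Finset.mem_range, MonDeg, LexLt, Prod.mk.injEq]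
  constructor
  · rintro ⟨hm, hlt | ⟨rfl, hlt⟩⟩
    · exact ⟨x, by omega, y, by rw [if_neg (by omega)]; omega, rfl, rfl, by omega⟩
    · exact ⟨x, by omega, y, by rwa [if_pos rfl], rfl, rfl, by omega⟩
  · rintro ⟨a', ha', b', hb', rfl, rfl, rfl⟩
    split_ifs at hb' with h
    · exact ⟨by omega, Or.inr ⟨h, hb'⟩⟩
    · exact ⟨by omega, Or.inl (by omega)⟩

theorem lexRank_eq {d a b : ℕ} (c : ℕ) (hab : a + b ≤ d) :
    lexRank d (a, b, c) = lexRowStart d a + b := by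
  rw [lexRank, setOf_lexLt_eq_biUnion c hab, Set.ncard_coe_finset, Finset.card_biUnion]
  · have hinj (a' : ℕ) : Function.Injective fun b' => (a', b', d - a' - b') :=
      fun _ _ h => by simpa using congrArg (·.2.1) h
    simp only [Finset.card_image_of_injective _ (hinj _), Finset.card_range,
      Finset.sum_range_succ, if_pos]
    rw [Finset.sum_congr rfl fun j hj => if_neg (Finset.mem_range.1 hj).ne]
    rfl
  · intro x _ y _ hxy
    simp only [Function.onFun, Finset.disjoint_left, Finset.mem_image]
    rintro _ ⟨_, _, rfl⟩ ⟨_, _, h⟩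
    exact hxy (Prod.mk.inj h).1.symm

theorem lexRank_lt_lexRank {d : ℕ} {m m' : ℕ × ℕ × ℕ} (hm : m ∈ MonDeg d) (hm' : m' ∈ MonDeg d)
    (h : LexLt m m') : lexRank d m < lexRank d m' := by
  obtain ⟨a, b, c⟩ := m
  obtain ⟨a', b', c'⟩ := m'
  simp only [MonDeg, Set.mem_ofPred_eq] at hm hm'
  simp only [LexLt] at h
  rw [lexRank_eq c (by omega), lexRank_eq c' (by omega)]
  rcases h with h | ⟨rfl, h⟩
  · have := lexRowStart_mono d (show a + 1 ≤ a' from h)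
    rw [lexRowStart_succ] at this
    omega
  · omega

theorem isLexLeast_lexSeg_of_lexRank_eq {d h : ℕ} {m : ℕ × ℕ × ℕ} (hm : m ∈ MonDeg d)
    (hrank : lexRank d m = h) :
    m ∈ LexSeg d h ∧ ∀ m' ∈ LexSeg d h, ¬ LexLt m' m :=
  ⟨⟨hm, hrank.ge⟩, fun _ ⟨hm', hle⟩ hlt => by
    have := lexRank_lt_lexRank hm' hm hlt
    omega⟩

theorem stmt5_general (d i κ b c : ℕ)
    (hb : (b : ℤ) = (i : ℤ) - ((κ : ℤ) - 1) * d + ((κ : ℤ) - 1) * ((κ : ℤ) - 2) / 2 - 1)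
    (hc : (c : ℤ) = (κ : ℤ) * d - (κ : ℤ) * ((κ : ℤ) - 1) / 2 - (i : ℤ)) :
    (κ, b, c) ∈ LexSeg d (d + i) ∧
      (∀ m ∈ LexSeg d (d + i), ¬ LexLt m (κ, b, c)) ∧
      lexRank d (κ, b, c) = d + i := by
  -- Both products are even, so the integer divisions by 2 in `hb` and `hc` are exact.
  have hp := Int.ediv_two_mul_two_of_even (Int.even_mul_pred_self ((κ : ℤ) - 1))
  have hq := Int.ediv_two_mul_two_of_even (Int.even_mul_pred_self (κ : ℤ))
  rw [sub_sub, one_add_one_eq_two] at hp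
  have hdeg : κ + b + c = d := by
    zify
    linarith
  have hrank : lexRank d (κ, b, c) = d + i := by
    have hstart := two_mul_lexRowStart (show κ ≤ d + 1 by omega)
    rw [lexRank_eq c (by omega)]
    zify
    linarith
  obtain ⟨hmem, hleast⟩ := isLexLeast_lexSeg_of_lexRank_eq hdeg hrank
  exact ⟨hmem, hleast, hrank⟩

/-- Lemma on lex segments: for `d ≥ 1`, `1 ≤ i ≤ (d² + d)/2` and `κ` the
(unique) integer with `1 ≤ κ ≤ d` and `(κ-1)d - (κ-1)(κ-2)/2 < i ≤ κd - κ(κ-1)/2`,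
the lex-smallest element of the degree-`d` lex segment of colength `d + i`
(i.e. the `(d+i+1)`-th lex-smallest degree-`d` monomial) is
`x₁^κ x₂^{i-(κ-1)d+(κ-1)(κ-2)/2-1} x₃^{κd-κ(κ-1)/2-i}`. -/
theorem stmt5 (d i κ b c : ℕ) (hd : 1 ≤ d) (hi : 1 ≤ i)
    (hi2 : 2 * i ≤ d ^ 2 + d)
    (hκ1 : 1 ≤ κ) (hκd : κ ≤ d)
    (hlow : ((κ : ℤ) - 1) * d - ((κ : ℤ) - 1) * ((κ : ℤ) - 2) / 2 < (i : ℤ))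
    (hup : (i : ℤ) ≤ (κ : ℤ) * d - (κ : ℤ) * ((κ : ℤ) - 1) / 2)
    (hb : (b : ℤ) = (i : ℤ) - ((κ : ℤ) - 1) * d + ((κ : ℤ) - 1) * ((κ : ℤ) - 2) / 2 - 1)
    (hc : (c : ℤ) = (κ : ℤ) * d - (κ : ℤ) * ((κ : ℤ) - 1) / 2 - (i : ℤ)) :
    (κ, b, c) ∈ LexSeg d (d + i) ∧
      (∀ m ∈ LexSeg d (d + i), ¬ LexLt m (κ, b, c)) ∧
      lexRank d (κ, b, c) = d + i :=
  stmt5_general d i κ b c hb hc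
end

section
/- Let d ≥ 1, let κ be an integer with 1 ≤ κ ≤ d, and let i be an integer with (κ−1)d − κ(κ−3)/2 ≤ i ≤ κd − κ(κ−1)/2. Let S be the degree-d lex segment of colength d + i in x₁, x₂, x₃. Then exactly d + i + κ monomials of degree d + 1 have no divisor in S; equivalently, the number of degree-(d+1) monomials divisible by at least one element of S equals binom(d+3, 2) − (d + i + κ). (This expresses that the Macaulay growth (d+i)^{⟨d⟩} equals d + i + κ for i in this range.) -/
/-!
The degree-`d` monomial `x₁^a x₂^b x₃^c` has lex rank `lexOffset d a + b`, where
`lexOffset d a` counts the monomials of smaller `x₁`-exponent. A monomial of degree `d + 1` has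
no divisor in the lex segment of colength `h` iff its lex-largest degree-`d` divisor, obtained by
dividing by the last variable that occurs, has rank `< h`. Those divisible by `x₃` are in
bijection with their quotients by `x₃`, so `h` of them qualify; the remaining ones
`x₁^a x₂^(d+1-a)` qualify iff `lexOffset d (a + 1) ≤ h`. The bounds on `i` say exactly that
`lexOffset d κ ≤ d + i < lexOffset d (κ + 1)`, so this happens iff `a < κ`.
-/

open Set

lemma ncard_setOf_lt_of_bijOn_Iio {α : Type*} {f : α → ℕ} {s : Set α} {N n : ℕ}
    (hf : BijOn f s (Iio N)) (hn : n ≤ N) : {x | x ∈ s ∧ f x < n}.ncard = n := by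
  have : BijOn f {x | x ∈ s ∧ f x < n} (Iio n) :=
    ⟨fun x hx => hx.2, hf.injOn.mono fun x hx => hx.1, fun y hy => by
      obtain ⟨x, hx, rfl⟩ := hf.surjOn (lt_of_lt_of_le hy hn)
      exact ⟨x, ⟨hx, hy⟩, rfl⟩⟩
  rw [this.ncard_eq, ncard_Iio_nat]

-- The number of degree-`d` monomials with `x₁`-exponent below `a`: there are `d + 1 - j` of
-- exponent `j`.
def lexOffset (d a : ℕ) : ℕ := ∑ j ∈ Finset.range a, (d + 1 - j)

def lexKey (d : ℕ) (m : ℕ × ℕ × ℕ) : ℕ := lexOffset d m.1 + m.2.1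

section LexOffset

variable {d : ℕ}

lemma lexOffset_succ (d a : ℕ) : lexOffset d (a + 1) = lexOffset d a + (d + 1 - a) :=
  Finset.sum_range_succ _ a

lemma lexOffset_mono (d : ℕ) : Monotone (lexOffset d) := fun _ _ h =>
  Finset.sum_le_sum_of_subset (Finset.range_subset_range.2 h)

lemma lexOffset_add_choose_two {a : ℕ} (ha : a ≤ d + 1) :
    lexOffset d a + a.choose 2 = a * (d + 1) := by
  induction a with
  | zero => simp [lexOffset]
  | succ a ih =>
    rw [lexOffset_succ, Nat.choose_succ_succ', Nat.choose_one_right]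
    have ih := ih (by omega)
    have hsub : d + 1 - a + a = d + 1 := by omega
    nlinarith

lemma two_mul_choose_two_add_self (n : ℕ) : 2 * n.choose 2 + n = n * n := by
  induction n with
  | zero => rfl
  | succ n ih => rw [Nat.choose_succ_succ', Nat.choose_one_right]; linarith

lemma lexOffset_succ_self (d : ℕ) : lexOffset d (d + 1) = (d + 2).choose 2 := by
  have h := lexOffset_add_choose_two (d := d) le_rfl
  have hchoose := two_mul_choose_two_add_self (d + 1)
  have hpascal : (d + 2).choose 2 = (d + 1).choose 2 + (d + 1) := by
    rw [Nat.choose_succ_succ', Nat.choose_one_right, add_comm]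
  omega

lemma le_of_lexOffset_lt_succ {κ : ℕ} (h : lexOffset d κ < lexOffset d (κ + 1)) : κ ≤ d := by
  rw [lexOffset_succ] at h; omega

lemma lexOffset_le_iff {κ h a : ℕ} (hκ : lexOffset d κ ≤ h) (hκ' : h < lexOffset d (κ + 1)) :
    lexOffset d a ≤ h ↔ a ≤ κ :=
  ⟨fun ha => by_contra fun h' => absurd (lexOffset_mono d (show κ + 1 ≤ a by omega)) (by omega),
    fun ha => (lexOffset_mono d ha).trans hκ⟩

end LexOffset

section LexKey

variable {d : ℕ} {m m' : ℕ × ℕ × ℕ}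

lemma lexKey_lt_of_fst_lt (hm : m ∈ MonDeg d) (h : m.1 < m'.1) : lexKey d m < lexKey d m' := by
  have hm : m.1 + m.2.1 + m.2.2 = d := hm
  have := lexOffset_mono d (Nat.succ_le_of_lt h)
  rw [lexOffset_succ] at this
  unfold lexKey
  omega

lemma lexLt_iff_lexKey_lt (hm : m ∈ MonDeg d) (hm' : m' ∈ MonDeg d) :
    LexLt m m' ↔ lexKey d m < lexKey d m' := by
  constructor
  · rintro (h | ⟨h₁, h₂⟩)
    · exact lexKey_lt_of_fst_lt hm h
    · simp only [lexKey, h₁]; omega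
  · intro h
    rcases lt_trichotomy m.1 m'.1 with h₁ | h₁ | h₁
    · exact Or.inl h₁
    · exact Or.inr ⟨h₁, by simp only [lexKey, h₁] at h; omega⟩
    · exact absurd (lexKey_lt_of_fst_lt hm' h₁) (by omega)

lemma injOn_lexKey (d : ℕ) : InjOn (lexKey d) (MonDeg d) := by
  intro m hm m' hm' h
  have h₁ := mt (lexLt_iff_lexKey_lt hm hm').1 h.not_lt
  have h₂ := mt (lexLt_iff_lexKey_lt hm' hm).1 h.not_gt
  have hm : m.1 + m.2.1 + m.2.2 = d := hm
  have hm' : m'.1 + m'.2.1 + m'.2.2 = d := hm'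
  simp only [LexLt, not_or, not_and] at h₁ h₂
  ext <;> omega

lemma exists_lexKey_eq {n a : ℕ} (hn : n < lexOffset d a) : ∃ m ∈ MonDeg d, lexKey d m = n := by
  induction a with
  | zero => simp [lexOffset] at hn
  | succ a ih =>
    rw [lexOffset_succ] at hn
    by_cases h : n < lexOffset d a
    · exact ih h
    · exact ⟨(a, n - lexOffset d a, d - a - (n - lexOffset d a)),
        show _ = d by dsimp only; omega, show _ = n by simp only [lexKey]; omega⟩

lemma bijOn_lexKey (d : ℕ) : BijOn (lexKey d) (MonDeg d) (Iio ((d + 2).choose 2)) := by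
  rw [← lexOffset_succ_self]
  refine ⟨fun m hm => ?_, injOn_lexKey d, fun n hn => exists_lexKey_eq hn⟩
  have hm' : m.1 + m.2.1 + m.2.2 = d := hm
  exact lexKey_lt_of_fst_lt (m' := (d + 1, 0, 0)) hm (by dsimp only; omega)

lemma lexRank_eq_lexKey (hm : m ∈ MonDeg d) : lexRank d m = lexKey d m := by
  have : {m' | m' ∈ MonDeg d ∧ LexLt m' m} = {m' | m' ∈ MonDeg d ∧ lexKey d m' < lexKey d m} :=
    Set.ext fun m' => and_congr_right fun hm' => lexLt_iff_lexKey_lt hm' hm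
  rw [lexRank, this, ncard_setOf_lt_of_bijOn_Iio (bijOn_lexKey d) ((bijOn_lexKey d).mapsTo hm).le]

lemma ncard_monDeg (d : ℕ) : (MonDeg d).ncard = (d + 2).choose 2 := by
  rw [(bijOn_lexKey d).ncard_eq, ncard_Iio_nat]

lemma finite_monDeg (d : ℕ) : (MonDeg d).Finite :=
  Set.finite_of_ncard_pos (by rw [ncard_monDeg]; exact Nat.choose_pos (by omega))

end LexKey

-- Dividing by the last variable that occurs gives the lex-largest divisor of one degree less.
def lexMaxDivisor (m : ℕ × ℕ × ℕ) : ℕ × ℕ × ℕ :=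
  if 0 < m.2.2 then (m.1, m.2.1, m.2.2 - 1)
  else if 0 < m.2.1 then (m.1, m.2.1 - 1, 0) else (m.1 - 1, 0, 0)

section LexMaxDivisor

variable {d h : ℕ} {m : ℕ × ℕ × ℕ}

lemma lexMaxDivisor_mem_monDeg (hm : m ∈ MonDeg (d + 1)) : lexMaxDivisor m ∈ MonDeg d := by
  obtain ⟨a, b, c⟩ := m
  simp only [MonDeg, mem_ofPred_eq, lexMaxDivisor] at hm ⊢
  split_ifs <;> dsimp only at * <;> omega

lemma monDvd_lexMaxDivisor (m : ℕ × ℕ × ℕ) : MonDvd (lexMaxDivisor m) m := by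
  obtain ⟨a, b, c⟩ := m
  simp only [MonDvd, lexMaxDivisor]
  split_ifs <;> dsimp only at * <;> omega

lemma lexKey_le_lexKey_lexMaxDivisor {s : ℕ × ℕ × ℕ} (hs : s ∈ MonDeg d)
    (hm : m ∈ MonDeg (d + 1)) (hsm : MonDvd s m) : lexKey d s ≤ lexKey d (lexMaxDivisor m) := by
  rw [← not_lt, ← lexLt_iff_lexKey_lt (lexMaxDivisor_mem_monDeg hm) hs]
  obtain ⟨a, b, c⟩ := m
  obtain ⟨x, y, z⟩ := s
  simp only [MonDeg, MonDvd, LexLt, lexMaxDivisor, mem_ofPred_eq] at hs hm hsm ⊢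
  split_ifs <;> dsimp only at * <;> omega

lemma forall_not_monDvd_iff (hm : m ∈ MonDeg (d + 1)) :
    (∀ s ∈ LexSeg d h, ¬ MonDvd s m) ↔ lexKey d (lexMaxDivisor m) < h := by
  constructor
  · intro hno
    by_contra hle
    refine hno _ ⟨lexMaxDivisor_mem_monDeg hm, ?_⟩ (monDvd_lexMaxDivisor m)
    rwa [lexRank_eq_lexKey (lexMaxDivisor_mem_monDeg hm), ← not_lt]
  · rintro hlt s ⟨hs, hsh⟩ hsm
    rw [lexRank_eq_lexKey hs] at hsh
    exact absurd (lexKey_le_lexKey_lexMaxDivisor hs hm hsm) (by omega)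

lemma lexKey_lexMaxDivisor_add_one (hm : m ∈ MonDeg (d + 1)) (hc : m.2.2 = 0) :
    lexKey d (lexMaxDivisor m) + 1 = lexOffset d (m.1 + 1) := by
  obtain ⟨a, b, c⟩ := m
  simp only [MonDeg, mem_ofPred_eq] at hm hc
  subst hc
  rcases Nat.eq_zero_or_pos b with rfl | hb
  · obtain rfl : a = d + 1 := by omega
    simp [lexMaxDivisor, lexKey, lexOffset_succ]
  · simp only [lexMaxDivisor, lexKey, lt_irrefl, if_false, hb, if_true, lexOffset_succ]
    omega

end LexMaxDivisor

section Count

variable {d h κ : ℕ}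

lemma setOf_forall_not_monDvd_eq (hκ : lexOffset d κ ≤ h) (hκ' : h < lexOffset d (κ + 1)) :
    {m | m ∈ MonDeg (d + 1) ∧ ∀ s ∈ LexSeg d h, ¬ MonDvd s m} =
      (fun s : ℕ × ℕ × ℕ => (s.1, s.2.1, s.2.2 + 1)) '' {s | s ∈ MonDeg d ∧ lexKey d s < h} ∪
        (fun a => (a, d + 1 - a, 0)) '' Iio κ := by
  have hκd : κ ≤ d := le_of_lexOffset_lt_succ (hκ.trans_lt hκ')
  ext ⟨a, b, c⟩
  constructor
  · rintro ⟨hm, hno⟩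
    rw [forall_not_monDvd_iff hm] at hno
    have hdeg : a + b + c = d + 1 := hm
    rcases Nat.eq_zero_or_pos c with rfl | hc
    · have hoff := lexKey_lexMaxDivisor_add_one hm rfl
      dsimp only at hoff
      refine Or.inr ⟨a, (lexOffset_le_iff (a := a + 1) hκ hκ').1 (by omega), ?_⟩
      simp only [Prod.mk.injEq, true_and, and_true]
      omega
    · refine Or.inl ⟨lexMaxDivisor (a, b, c), ⟨lexMaxDivisor_mem_monDeg hm, hno⟩, ?_⟩
      simp only [lexMaxDivisor, hc, if_true, Prod.mk.injEq, true_and]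
      omega
  · rintro (⟨s, ⟨hs, hlt⟩, hsm⟩ | ⟨a', ha', hm⟩)
    · have hm : (a, b, c) ∈ MonDeg (d + 1) := by
        simp only [MonDeg, mem_ofPred_eq, Prod.mk.injEq] at hs hsm ⊢
        omega
      refine ⟨hm, (forall_not_monDvd_iff hm).2 ?_⟩
      simp only [Prod.mk.injEq] at hsm
      obtain ⟨rfl, rfl, rfl⟩ := hsm
      simpa [lexMaxDivisor] using hlt
    · simp only [Prod.mk.injEq] at hm
      obtain ⟨rfl, rfl, rfl⟩ := hm
      have hm : (a', d + 1 - a', 0) ∈ MonDeg (d + 1) := by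
        have : a' < κ := ha'
        simp only [MonDeg, mem_ofPred_eq]
        omega
      refine ⟨hm, (forall_not_monDvd_iff hm).2 ?_⟩
      have hoff := lexKey_lexMaxDivisor_add_one hm rfl
      have := (lexOffset_le_iff (a := a' + 1) hκ hκ').2 ha'
      dsimp only at hoff
      omega

lemma ncard_setOf_forall_not_monDvd (hκ : lexOffset d κ ≤ h) (hκ' : h < lexOffset d (κ + 1)) :
    {m | m ∈ MonDeg (d + 1) ∧ ∀ s ∈ LexSeg d h, ¬ MonDvd s m}.ncard = h + κ := by
  have hκd : κ ≤ d := le_of_lexOffset_lt_succ (hκ.trans_lt hκ')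
  have hh : h ≤ (d + 2).choose 2 :=
    lexOffset_succ_self d ▸ (hκ'.trans_le (lexOffset_mono d (by omega))).le
  have hdisj : Disjoint
      ((fun s : ℕ × ℕ × ℕ => (s.1, s.2.1, s.2.2 + 1)) '' {s | s ∈ MonDeg d ∧ lexKey d s < h})
      ((fun a => (a, d + 1 - a, 0)) '' Iio κ) := by
    rw [disjoint_left]
    rintro _ ⟨s, -, rfl⟩ ⟨a, -, ha⟩
    simp only [Prod.mk.injEq] at ha
    omega
  rw [setOf_forall_not_monDvd_eq hκ hκ',
    ncard_union_eq hdisj (((finite_monDeg d).subset fun _ hs => hs.1).image _)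
      ((finite_Iio κ).image _),
    ncard_image_of_injective _ fun s t hst => by
      simp only [Prod.mk.injEq, add_left_inj] at hst
      exact Prod.ext hst.1 (Prod.ext hst.2.1 hst.2.2),
    ncard_image_of_injective _ (fun a b hab => (Prod.mk.inj hab).1),
    ncard_setOf_lt_of_bijOn_Iio (bijOn_lexKey d) hh, ncard_Iio_nat]

end Count

lemma ncard_setOf_exists_monDvd (n : ℕ) (S : Set (ℕ × ℕ × ℕ)) :
    {m | m ∈ MonDeg n ∧ ∃ s ∈ S, MonDvd s m}.ncard =
      (n + 2).choose 2 - {m | m ∈ MonDeg n ∧ ∀ s ∈ S, ¬ MonDvd s m}.ncard := by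
  have : {m | m ∈ MonDeg n ∧ ∃ s ∈ S, MonDvd s m} =
      MonDeg n \ {m | m ∈ MonDeg n ∧ ∀ s ∈ S, ¬ MonDvd s m} := by
    ext m
    simp only [mem_ofPred_eq, mem_sdiff, not_and, not_forall, not_not, exists_prop]
    exact ⟨fun ⟨hm, hS⟩ => ⟨hm, fun _ => hS⟩, fun ⟨hm, hS⟩ => ⟨hm, hS hm⟩⟩
  rw [this, ncard_sdiff (fun _ hm => hm.1) ((finite_monDeg n).subset fun _ hm => hm.1),
    ncard_monDeg]

lemma lexOffset_le_and_lt_succ_of_int_bounds {d i κ : ℕ} (hκd : κ ≤ d)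
    (hlow : ((κ : ℤ) - 1) * d - (κ : ℤ) * ((κ : ℤ) - 3) / 2 ≤ (i : ℤ))
    (hup : (i : ℤ) ≤ (κ : ℤ) * d - (κ : ℤ) * ((κ : ℤ) - 1) / 2) :
    lexOffset d κ ≤ d + i ∧ d + i < lexOffset d (κ + 1) := by
  have hκ := lexOffset_add_choose_two (d := d) (a := κ) (by omega)
  have hκ' := lexOffset_add_choose_two (d := d) (a := κ + 1) (by omega)
  rw [Nat.choose_succ_succ', Nat.choose_one_right] at hκ'
  have hhalf : (κ : ℤ) * ((κ : ℤ) - 1) / 2 = κ.choose 2 := by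
    have := two_mul_choose_two_add_self κ
    zify at this
    rw [show (κ : ℤ) * ((κ : ℤ) - 1) = 2 * κ.choose 2 by linarith]
    omega
  have hhalf' : (κ : ℤ) * ((κ : ℤ) - 3) / 2 = κ.choose 2 - κ := by
    rw [show (κ : ℤ) * ((κ : ℤ) - 3) = κ * (κ - 1) + 2 * (-κ) by ring,
      Int.add_mul_ediv_left _ _ two_ne_zero, hhalf]
    ring
  rw [hhalf'] at hlow
  rw [hhalf] at hup
  zify at hκ hκ' ⊢
  constructor <;> linarith

theorem stmt6_general (d i κ : ℕ)
    (hκd : κ ≤ d)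
    (hlow : ((κ : ℤ) - 1) * d - (κ : ℤ) * ((κ : ℤ) - 3) / 2 ≤ (i : ℤ))
    (hup : (i : ℤ) ≤ (κ : ℤ) * d - (κ : ℤ) * ((κ : ℤ) - 1) / 2) :
    Set.ncard {m | m ∈ MonDeg (d + 1) ∧ ∀ s ∈ LexSeg d (d + i), ¬ MonDvd s m}
        = d + i + κ ∧
    Set.ncard {m | m ∈ MonDeg (d + 1) ∧ ∃ s ∈ LexSeg d (d + i), MonDvd s m}
        = Nat.choose (d + 3) 2 - (d + i + κ) := by
  obtain ⟨hκ, hκ'⟩ := lexOffset_le_and_lt_succ_of_int_bounds hκd hlow hup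
  have hcard := ncard_setOf_forall_not_monDvd hκ hκ'
  exact ⟨hcard, by rw [ncard_setOf_exists_monDvd, hcard]⟩

/-- for `d ≥ 1`, `1 ≤ κ ≤ d` and
`(κ-1)d - κ(κ-3)/2 ≤ i ≤ κd - κ(κ-1)/2`, exactly `d + i + κ` monomials of degree
`d + 1` have no divisor in the degree-`d` lex segment `S` of colength `d + i`;
equivalently, the number of degree-`(d+1)` monomials divisible by some element of `S`
is `C(d+3, 2) - (d + i + κ)`.  (This says `(d+i)^{⟨d⟩} = d + i + κ`.) -/
theorem stmt6 (d i κ : ℕ) (hd : 1 ≤ d)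
    (hκ1 : 1 ≤ κ) (hκd : κ ≤ d)
    (hlow : ((κ : ℤ) - 1) * d - (κ : ℤ) * ((κ : ℤ) - 3) / 2 ≤ (i : ℤ))
    (hup : (i : ℤ) ≤ (κ : ℤ) * d - (κ : ℤ) * ((κ : ℤ) - 1) / 2) :
    Set.ncard {m | m ∈ MonDeg (d + 1) ∧ ∀ s ∈ LexSeg d (d + i), ¬ MonDvd s m}
        = d + i + κ ∧
    Set.ncard {m | m ∈ MonDeg (d + 1) ∧ ∃ s ∈ LexSeg d (d + i), MonDvd s m}
        = Nat.choose (d + 3) 2 - (d + i + κ) :=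
  stmt6_general d i κ hκd hlow hup
end

section
/- Let d ≥ 1, i ≥ 1, j ≥ 1 be integers with d + i + j ≤ binom(d+1, 2). Let I_{d−1} be the lex segment of colength d + i + j in degree d − 1 and I_d the lex segment of colength d + i in degree d (in x₁, x₂, x₃), and let G_d be the set of monomials in I_d divisible by no element of I_{d−1} (the degree-d minimal generators of the lex-segment ideal with h_{d−1} = d + i + j and h_d = d + i). Let ℓ be the unique integer with 1 ≤ ℓ ≤ d and (ℓ−1)d − (ℓ−2)(ℓ−1)/2 < i ≤ ℓd − (ℓ−1)ℓ/2. Then the number of elements T of G_d with x₃ dividing T (equivalently, Σ_{T ∈ G_d} binom(m(T)−1, 2)) equals j + ℓ. (By the Eliahou–Kervaire formula, this is the graded Betti number β_{2,d+2} of the lex-segment ideal.) -/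
namespace Stmt8Aux

def F (d a : ℕ) : ℕ := ∑ k ∈ Finset.range a, (d + 1 - k)

lemma F_zero (d : ℕ) : F d 0 = 0 := by simp [F]

lemma F_succ (d a : ℕ) : F d (a + 1) = F d a + (d + 1 - a) := by
  simp [F, Finset.sum_range_succ]

lemma F_mono (d : ℕ) {x y : ℕ} (h : x ≤ y) : F d x ≤ F d y :=
  Finset.sum_le_sum_of_subset (Finset.range_subset_range.2 h)

lemma F_shift (d : ℕ) : ∀ a ≤ d, F d a = F (d - 1) a + a := by
  intro a
  induction a with
  | zero => simp [F_zero]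
  | succ a ih =>
    intro h
    rw [F_succ, F_succ, ih (by omega)]
    omega

lemma monDeg_finite (d : ℕ) : (MonDeg d).Finite := by
  apply Set.Finite.subset
    ((Finset.range (d+1) ×ˢ Finset.range (d+1) ×ˢ Finset.range (d+1)).finite_toSet)
  rintro ⟨a, b, c⟩ h
  simp only [MonDeg, Set.mem_setOf_eq] at h
  simp only [Finset.coe_product, Set.mem_prod, Finset.mem_coe, Finset.mem_range]
  omega

lemma L_finite (e : ℕ) (m : ℕ × ℕ × ℕ) : {x | x ∈ MonDeg e ∧ LexLt x m}.Finite :=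
  (monDeg_finite e).subset (fun _ hx => hx.1)

lemma lexRank_base (e b c : ℕ) : lexRank e (0, 0, c) = 0 := by
  unfold lexRank
  convert Set.ncard_empty (ℕ × ℕ × ℕ)
  ext ⟨x, y, z⟩
  simp only [Set.mem_setOf_eq, Set.mem_empty_iff_false, iff_false, not_and]
  intro _
  simp only [LexLt]
  omega

lemma lexRank_insert {e : ℕ} {m m' : ℕ × ℕ × ℕ} (hm : m ∈ MonDeg e)
    (h : ∀ x ∈ MonDeg e, LexLt x m' ↔ LexLt x m ∨ x = m) :
    lexRank e m' = lexRank e m + 1 := by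
  unfold lexRank
  have hset : {x | x ∈ MonDeg e ∧ LexLt x m'} = insert m {x | x ∈ MonDeg e ∧ LexLt x m} := by
    ext x
    simp only [Set.mem_insert_iff, Set.mem_setOf_eq]
    constructor
    · rintro ⟨hx, hlt⟩
      rcases (h x hx).1 hlt with h' | h'
      · exact Or.inr ⟨hx, h'⟩
      · exact Or.inl h'
    · rintro (rfl | ⟨hx, hlt⟩)
      · exact ⟨hm, (h x hm).2 (Or.inr rfl)⟩
      · exact ⟨hx, (h x hx).2 (Or.inl hlt)⟩
  rw [hset, Set.ncard_insert_of_notMem _ (L_finite e m)]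
  rintro ⟨-, hlt⟩
  simp only [LexLt] at hlt
  omega

lemma rank_step_b (e a b c : ℕ) (hdeg : a + b + (c + 1) = e) :
    lexRank e (a, b + 1, c) = lexRank e (a, b, c + 1) + 1 := by
  apply lexRank_insert (by simp only [MonDeg, Set.mem_setOf_eq]; omega)
  rintro ⟨x, y, z⟩ hx
  simp only [MonDeg, Set.mem_setOf_eq] at hx
  simp only [LexLt, Prod.mk.injEq]
  omega

lemma rank_step_a (e a c : ℕ) (hdeg : (a + 1) + 0 + c = e) :
    lexRank e (a + 1, 0, c) = lexRank e (a, e - a, 0) + 1 := by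
  apply lexRank_insert (by simp only [MonDeg, Set.mem_setOf_eq]; omega)
  rintro ⟨x, y, z⟩ hx
  simp only [MonDeg, Set.mem_setOf_eq] at hx
  simp only [LexLt, Prod.mk.injEq]
  omega

lemma rank_row (e a : ℕ) : ∀ b c, a + b + c = e →
    lexRank e (a, b, c) = lexRank e (a, 0, e - a) + b := by
  intro b
  induction b with
  | zero =>
    intro c hc
    obtain rfl : c = e - a := by omega
    simp
  | succ b ih =>
    intro c hc
    rw [rank_step_b e a b c (by omega), ih (c + 1) (by omega)]
    omega

lemma rank_col (e : ℕ) : ∀ a ≤ e, lexRank e (a, 0, e - a) = F e a := by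
  intro a
  induction a with
  | zero => intro _; simpa [F_zero] using lexRank_base e 0 e
  | succ a ih =>
    intro h
    rw [rank_step_a e a (e - (a + 1)) (by omega),
      rank_row e a (e - a) 0 (by omega), ih (by omega), F_succ]
    omega

lemma rank_eq (e a b c : ℕ) (h : a + b + c = e) : lexRank e (a, b, c) = F e a + b := by
  rw [rank_row e a b c h, rank_col e a (by omega)]

lemma mem_seg {e h a b c : ℕ} :
    (a, b, c) ∈ LexSeg e h ↔ a + b + c = e ∧ h ≤ F e a + b := by
  unfold LexSeg MonDeg
  simp only [Set.mem_setOf_eq]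
  constructor
  · rintro ⟨h1, h2⟩
    exact ⟨h1, by rwa [rank_eq e a b c h1] at h2⟩
  · rintro ⟨h1, h2⟩
    exact ⟨h1, by rwa [rank_eq e a b c h1]⟩

lemma F_castZ (d : ℕ) : ∀ a ≤ d, 2 * (F (d - 1) a : ℤ) = 2 * a * d - ((a : ℤ) - 1) * a := by
  intro a
  induction a with
  | zero => simp [F_zero]
  | succ a ih =>
    intro h
    rw [F_succ]
    have h1 : ((d - 1 + 1 - a : ℕ) : ℤ) = (d : ℤ) - a := by omega
    push_cast [h1]
    have := ih (by omega)
    push_cast at this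
    linear_combination this

lemma F_total (d : ℕ) (hd : 1 ≤ d) : F (d - 1) d = Nat.choose (d + 1) 2 := by
  have h1 := F_castZ d d le_rfl
  have h2 : Nat.choose (d + 1) 2 = (d + 1) * (d + 1 - 1) / 2 := Nat.choose_two_right (d + 1)
  simp only [Nat.add_sub_cancel] at h2
  have h3 : ((d + 1) * d : ℕ) = 2 * F (d - 1) d := by
    have : (((d + 1) * d : ℕ) : ℤ) = 2 * (F (d - 1) d : ℤ) := by
      push_cast
      linear_combination -h1
    exact_mod_cast this
  rw [h2]
  generalize hM : (d + 1) * d = M at h3 ⊢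
  omega

lemma exists_a (d : ℕ) : ∀ m ≤ d, ∀ n, n < F (d - 1) m →
    ∃ a, a < m ∧ F (d - 1) a ≤ n ∧ n < F (d - 1) (a + 1) := by
  intro m
  induction m with
  | zero => intro _ n hn; simp [F_zero] at hn
  | succ m ih =>
    intro h n hn
    rcases lt_or_ge n (F (d - 1) m) with h' | h'
    · obtain ⟨a, ha⟩ := ih (by omega) n h'
      exact ⟨a, by omega, ha.2⟩
    · exact ⟨m, by omega, h', hn⟩

lemma F_eq_int (d a : ℕ) (h : a ≤ d) :
    (F (d - 1) a : ℤ) = (a : ℤ) * d - ((a : ℤ) - 1) * a / 2 := by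
  have hc := F_castZ d a h
  have hc' : 2 * (F (d - 1) a : ℤ) = 2 * ((a : ℤ) * d) - ((a : ℤ) - 1) * a := by
    linear_combination hc
  generalize hQ : (a : ℤ) * (d : ℤ) = Q at hc' ⊢
  generalize hP : ((a : ℤ) - 1) * (a : ℤ) = P at hc' ⊢
  omega

end Stmt8Aux

open Stmt8Aux in
/-- the Betti number `β_{2,d+2}` of the lex-segment ideal with
`h_{d-1} = d + i + j` and `h_d = d + i`: with `G` the set of degree-`d` monomials of
the lex segment of colength `d + i` having no divisor in the degree-`(d-1)` lex segment
of colength `d + i + j`, the number of `T ∈ G` divisible by `x₃` (equivalently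
`Σ_{T ∈ G} C(m(T)-1, 2)`) equals `j + ℓ`, where `ℓ` is the unique integer with
`1 ≤ ℓ ≤ d` and `(ℓ-1)d - (ℓ-2)(ℓ-1)/2 < i ≤ ℓd - (ℓ-1)ℓ/2`. -/
theorem stmt8 (d i j ℓ : ℕ) (hd : 1 ≤ d) (hi : 1 ≤ i) (hj : 1 ≤ j)
    (hbd : d + i + j ≤ Nat.choose (d + 1) 2)
    (hℓ1 : 1 ≤ ℓ) (hℓd : ℓ ≤ d)
    (hlow : ((ℓ : ℤ) - 1) * d - ((ℓ : ℤ) - 2) * ((ℓ : ℤ) - 1) / 2 < (i : ℤ))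
    (hup : (i : ℤ) ≤ (ℓ : ℤ) * d - ((ℓ : ℤ) - 1) * (ℓ : ℤ) / 2) :
    Set.ncard {T | T ∈ LexSeg d (d + i) ∧
        (∀ S ∈ LexSeg (d - 1) (d + i + j), ¬ MonDvd S T) ∧ 0 < T.2.2} = j + ℓ := by
  have hgl : i ≤ F (d - 1) ℓ := by
    have h1 := F_eq_int d ℓ hℓd
    rw [← h1] at hup
    exact_mod_cast hup
  have hgl' : F (d - 1) (ℓ - 1) < i := by
    have h1 := F_eq_int d (ℓ - 1) (by omega)
    rw [show ((ℓ - 1 : ℕ) : ℤ) = (ℓ : ℤ) - 1 from by omega] at h1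
    rw [show ((ℓ : ℤ) - 1 - 1) = (ℓ : ℤ) - 2 from by ring] at h1
    rw [← h1] at hlow
    exact_mod_cast hlow
  have htot : d + i + j ≤ F (d - 1) d := by rw [F_total d hd]; exact hbd
  have hSeq : {T : ℕ × ℕ × ℕ | T ∈ LexSeg d (d + i) ∧
        (∀ S ∈ LexSeg (d - 1) (d + i + j), ¬ MonDvd S T) ∧ 0 < T.2.2}
      = {T : ℕ × ℕ × ℕ | T.1 + T.2.1 + T.2.2 = d ∧ 1 ≤ T.2.2 ∧
          d + i ≤ F d T.1 + T.2.1 ∧ F (d - 1) T.1 + T.2.1 < d + i + j} := by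
    ext ⟨a, b, c⟩
    simp only [Set.mem_setOf_eq]
    constructor
    · rintro ⟨hseg, hdiv, hc⟩
      rw [mem_seg] at hseg
      obtain ⟨hdeg, hr⟩ := hseg
      refine ⟨hdeg, hc, hr, ?_⟩
      by_contra hcon
      push_neg at hcon
      exact hdiv (a, b, c - 1) (mem_seg.2 ⟨by omega, hcon⟩)
        (by unfold MonDvd; exact ⟨le_rfl, le_rfl, Nat.sub_le c 1⟩)
    · rintro ⟨hdeg, hc, hr, hg⟩
      refine ⟨mem_seg.2 ⟨hdeg, hr⟩, ?_, hc⟩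
      rintro ⟨p, q, r⟩ hS hdvd
      have hdvd' : p ≤ a ∧ q ≤ b ∧ r ≤ c := hdvd
      obtain ⟨hp, hq, hrle⟩ := hdvd'
      rw [mem_seg] at hS
      obtain ⟨hSdeg, hSr⟩ := hS
      rcases eq_or_lt_of_le hp with rfl | hlt
      · omega
      · have h1 : F (d - 1) (p + 1) = F (d - 1) p + (d - 1 + 1 - p) := F_succ _ p
        have h2 : F (d - 1) (p + 1) ≤ F (d - 1) a := F_mono _ hlt
        omega
  rw [hSeq]
  have hbij : Set.BijOn (fun T : ℕ × ℕ × ℕ => F (d - 1) T.1 + T.2.1)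
      {T : ℕ × ℕ × ℕ | T.1 + T.2.1 + T.2.2 = d ∧ 1 ≤ T.2.2 ∧
          d + i ≤ F d T.1 + T.2.1 ∧ F (d - 1) T.1 + T.2.1 < d + i + j}
      ↑(Finset.Icc (d + i - ℓ) (d + i + j - 1)) := by
    refine ⟨?_, ?_, ?_⟩
    · rintro ⟨a, b, c⟩ ⟨hdeg, hc, hr, hg⟩
      dsimp only at hdeg hc hr hg
      simp only [Finset.coe_Icc, Set.mem_Icc]
      have hFa := F_shift d a (by omega)
      constructor
      · rcases le_or_gt a ℓ with h | h
        · omega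
        · have h2 : F (d - 1) (ℓ + 1) ≤ F (d - 1) a := F_mono _ (by omega)
          have h3 : F (d - 1) (ℓ + 1) = F (d - 1) ℓ + (d - 1 + 1 - ℓ) := F_succ _ ℓ
          omega
      · omega
    · rintro ⟨a, b, c⟩ ⟨hdeg, hc, hr, hg⟩ ⟨a', b', c'⟩ ⟨hdeg', hc', hr', hg'⟩ heq
      dsimp only at hdeg hc hr hg hdeg' hc' hr' hg' heq
      have e1 : F (d - 1) (a + 1) = F (d - 1) a + (d - 1 + 1 - a) := F_succ _ a
      have e1' : F (d - 1) (a' + 1) = F (d - 1) a' + (d - 1 + 1 - a') := F_succ _ a'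
      have m1 : ¬ a < a' := by
        intro hlt
        have := F_mono (d - 1) (show a + 1 ≤ a' by omega)
        omega
      have m2 : ¬ a' < a := by
        intro hlt
        have := F_mono (d - 1) (show a' + 1 ≤ a by omega)
        omega
      obtain rfl : a = a' := by omega
      have hb : b = b' := by omega
      subst hb
      have hcc : c = c' := by omega
      subst hcc
      rfl
    · intro n hn
      simp only [Finset.coe_Icc, Set.mem_Icc] at hn
      have hnlt : n < F (d - 1) d := by omega
      obtain ⟨a, had, h1, h2⟩ := exists_a d d le_rfl n hnlt
      have h3 : F (d - 1) (a + 1) = F (d - 1) a + (d - 1 + 1 - a) := F_succ _ a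
      have haℓ : ℓ ≤ a := by
        by_contra hcon
        have h4 : F (d - 1) (a + 1) ≤ F (d - 1) ℓ := F_mono _ (by omega)
        have h5 : F (d - 1) ℓ = F (d - 1) (ℓ - 1) + (d - 1 + 1 - (ℓ - 1)) := by
          have h6 := F_succ (d - 1) (ℓ - 1)
          rwa [show ℓ - 1 + 1 = ℓ from by omega] at h6
        omega
      have hFa := F_shift d a (by omega)
      refine ⟨(a, n - F (d - 1) a, d - a - (n - F (d - 1) a)), ?_, ?_⟩
      · simp only [Set.mem_setOf_eq]
        refine ⟨by omega, by omega, by omega, by omega⟩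
      · show F (d - 1) a + (n - F (d - 1) a) = n
        omega
  rw [← Set.ncard_image_of_injOn hbij.injOn, hbij.image_eq, Set.ncard_coe_finset,
    Nat.card_Icc]
  omega
end

section
/- Let k be a field and let A = k[x₁,x₂,x₃]/I be a standard graded Artinian algebra whose Hilbert function (h_i) satisfies: h₁ = 3, and for some integers d ≥ 1 and s ≥ 2, h_d = h_{d+1} = ⋯ = h_{d+s−1} = d + s and h_{d+s} > d + s. Then A has a nonzero socle element in degree d + s − 2, i.e., there is a nonzero homogeneous a ∈ A_{d+s−2} with A₁·a = 0; in particular A is not level. -/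
/-!
Write `P_r` for the forms of degree `r` in `k[x, y, z]` and `I_r = P_r ∩ I`, so that
`h_r = dim P_r - dim I_r`. Setting `z = 0` maps `P_r` onto the `r + 1` binary forms of degree `r`,
with kernel `z P_{r-1}`, so a space `U ⊆ P_r` has dimension `dim Ū + dim (U : z)_{r-1}`, where `Ū`
is its image. Under this map `P₁ U` goes onto `x Ū + y Ū`, and its kernel part contains both `z U`
and `z P₁ (U : z)`. Because `x Ū + y Ū` is strictly larger than `Ū ≠ 0`, induction on `r` yields
Macaulay's bound `h_{r+1} ≤ h_r` when `h_r ≤ r`, and its extremal case: if `U ⊆ P_{r+1}` has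
codimension `r + 2` and `P₁ U` has codimension at least `r + 3`, then `U = ℓ P_r` for a linear
form `ℓ`.

With `u = d + s - 2`, the hypotheses `h_{u+1} = u + 2 < h_{u+2}` thus give `I_{u+1} = ℓ P_u`. As
`h_u = u + 2` exceeds `dim P_u - dim P_{u-1} = u + 1`, some `ℓ g` with `g ∈ P_{u-1}` is not in `I`;
it is killed by `P₁` because `P₁ ℓ g ⊆ ℓ P_u ⊆ I`, so it is a socle element of degree `u`, below
the nonzero degree `u + 2`.
-/

open MvPolynomial

/-- The degree-`t` graded piece of the standard graded quotient `k[x₁,…,xₙ]/I`: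
the image in the quotient of the space of homogeneous polynomials of degree `t`. -/
noncomputable def gradedPiece (k : Type*) [Field k] (n : ℕ)
    (I : Ideal (MvPolynomial (Fin n) k)) (t : ℕ) :
    Submodule k (MvPolynomial (Fin n) k ⧸ I) :=
  (MvPolynomial.homogeneousSubmodule (Fin n) k t).map
    (Ideal.Quotient.mkₐ k I).toLinearMap

/-- The Hilbert function of the quotient `k[x₁,…,xₙ]/I`. -/
noncomputable def hilbFn (k : Type*) [Field k] (n : ℕ)
    (I : Ideal (MvPolynomial (Fin n) k)) (t : ℕ) : ℕ :=
  Module.finrank k (gradedPiece k n I t)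

/-- `I` is a homogeneous ideal: it contains all homogeneous components of its elements. -/
def IsHomogeneousIdeal (k : Type*) [Field k] (n : ℕ)
    (I : Ideal (MvPolynomial (Fin n) k)) : Prop :=
  ∀ p ∈ I, ∀ t : ℕ, MvPolynomial.homogeneousComponent t p ∈ I

/-- `a` is a (nonzero, homogeneous) socle element of degree `t` of the quotient:
`a ∈ A_t`, `a ≠ 0`, and `A₁ · a = 0`. -/
def IsSocleElem (k : Type*) [Field k] (n : ℕ)
    (I : Ideal (MvPolynomial (Fin n) k)) (t : ℕ)
    (a : MvPolynomial (Fin n) k ⧸ I) : Prop :=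
  a ∈ gradedPiece k n I t ∧ a ≠ 0 ∧
    ∀ b ∈ gradedPiece k n I 1, b * a = 0

/-- The quotient `A = k[x₁,…,xₙ]/I` is level: the socle vanishes in every degree `t`
strictly smaller than the socle degree (i.e. in every degree `t` such that `A_{t'} ≠ 0`
for some `t' > t`). -/
def IsLevel (k : Type*) [Field k] (n : ℕ)
    (I : Ideal (MvPolynomial (Fin n) k)) : Prop :=
  ∀ t : ℕ, (∃ t', t < t' ∧ gradedPiece k n I t' ≠ ⊥) →
    ∀ a, ¬ IsSocleElem k n I t a

open Submodule Module

namespace Submodule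

variable {k : Type*} [Field k]

theorem finrank_map_add_finrank_inf_ker {M N : Type*} [AddCommGroup M] [Module k M]
    [AddCommGroup N] [Module k N] (f : M →ₗ[k] N) (U : Submodule k M) [FiniteDimensional k U] :
    finrank k (U.map f) + finrank k ↥(U ⊓ LinearMap.ker f) = finrank k U := by
  have h := LinearMap.finrank_range_add_finrank_ker (f.domRestrict U)
  rwa [LinearMap.range_domRestrict, LinearMap.ker_domRestrict,
    ← finrank_map_subtype_eq U (comap U.subtype (LinearMap.ker f)), map_comap_subtype] at h

theorem finrank_span_singleton_mul {A : Type*} [CommRing A] [IsDomain A] [Algebra k A] {f : A}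
    (hf : f ≠ 0) (U : Submodule k A) : finrank k ↥((k ∙ f) * U) = finrank k U := by
  rw [mul_eq_map₂, map₂_span_singleton_eq_map]
  exact (equivMapOfInjective _ (mul_right_injective₀ hf) U).finrank_eq.symm

end Submodule

namespace MvPolynomial

variable {k σ : Type*} [Field k]

instance [Finite σ] (r : ℕ) : FiniteDimensional k (homogeneousSubmodule σ k r) :=
  Module.Finite.iff_fg.mpr (homogeneousSubmodule_fg _ _ r)

theorem homogeneousSubmodule_one_mul (n : ℕ) :
    homogeneousSubmodule σ k 1 * homogeneousSubmodule σ k n = homogeneousSubmodule σ k (n + 1) := by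
  rw [← homogeneousSubmodule_one_pow (σ := σ) (R := k) n,
    ← homogeneousSubmodule_one_pow (σ := σ) (R := k) (n + 1), pow_succ']

theorem span_singleton_mul_le_homogeneousSubmodule_one_mul {ℓ : MvPolynomial σ k}
    (hℓ : ℓ ∈ homogeneousSubmodule σ k 1) (V : Submodule k (MvPolynomial σ k)) :
    (k ∙ ℓ) * V ≤ homogeneousSubmodule σ k 1 * V :=
  mul_le_mul_left ((span_singleton_le_iff_mem _ _).mpr hℓ) V

theorem span_singleton_mul_homogeneousSubmodule_le {ℓ : MvPolynomial σ k}
    (hℓ : ℓ ∈ homogeneousSubmodule σ k 1) (n : ℕ) :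
    (k ∙ ℓ) * homogeneousSubmodule σ k n ≤ homogeneousSubmodule σ k (n + 1) :=
  (span_singleton_mul_le_homogeneousSubmodule_one_mul hℓ _).trans
    (homogeneousSubmodule_one_mul n).le

/-- Each `v ≠ 0` in `V` would give `w ∈ V` with `X i * w = X j * v`, of smaller degree in `X i`. -/
theorem eq_bot_of_span_X_mul_le {i j : σ} (hij : i ≠ j) {V : Submodule k (MvPolynomial σ k)}
    (hV : (k ∙ X j) * V ≤ (k ∙ X i) * V) : V = ⊥ := by
  suffices ∀ n, ∀ v ∈ V, degreeOf i v = n → v = 0 from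
    eq_bot_iff.mpr fun v hv => (mem_bot k).mpr (this _ v hv rfl)
  intro n
  induction n using Nat.strong_induction_on with
  | _ n ih =>
    intro v hv hdeg
    by_contra hv0
    obtain ⟨w, hw, hwv⟩ := mem_span_singleton_mul.mp (hV (mul_mem_mul (mem_span_singleton_self _) hv))
    have hw0 : w ≠ 0 := by
      rintro rfl
      exact hv0 (by simpa [X_ne_zero] using hwv.symm)
    have hdeg' : degreeOf i w + 1 = degreeOf i v := by
      rw [← (degreeOf_mul_X_eq_degreeOf_add_one_iff i w).mpr hw0, ← degreeOf_mul_X_of_ne v hij,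
        mul_comm, hwv, mul_comm]
    exact hw0 (ih _ (by omega) w hw rfl)

theorem finrank_lt_finrank_span_X_mul_sup {i j : σ} (hij : i ≠ j)
    {V : Submodule k (MvPolynomial σ k)} [FiniteDimensional k V] (hV : V ≠ ⊥) :
    finrank k V < finrank k ↥((k ∙ X i) * V ⊔ (k ∙ X j) * V : Submodule k (MvPolynomial σ k)) := by
  by_contra! hle
  have : FiniteDimensional k ↥((k ∙ X i) * V ⊔ (k ∙ X j) * V : Submodule k (MvPolynomial σ k)) := by
    rw [mul_eq_map₂, mul_eq_map₂, map₂_span_singleton_eq_map, map₂_span_singleton_eq_map]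
    infer_instance
  have heq : (k ∙ X i) * V = (k ∙ X i) * V ⊔ (k ∙ X j) * V :=
    eq_of_le_of_finrank_le le_sup_left (by rwa [finrank_span_singleton_mul (X_ne_zero i)])
  exact hV (eq_bot_of_span_X_mul_le hij (heq ▸ le_sup_right))

end MvPolynomial

section GradedQuotient

open MvPolynomial

variable {k : Type*} [Field k] {n : ℕ} (I : Ideal (MvPolynomial (Fin n) k))

local notation "P" => homogeneousSubmodule (Fin n) k

theorem hilbFn_add_finrank_inf (r : ℕ) :
    hilbFn k n I r + finrank k ↥(P r ⊓ I.restrictScalars k) = finrank k (P r) := by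
  have hker : LinearMap.ker (Ideal.Quotient.mkₐ k I).toLinearMap = I.restrictScalars k := by
    ext p
    simp [Ideal.Quotient.eq_zero_iff_mem]
  rw [← hker]
  exact finrank_map_add_finrank_inf_ker _ _

theorem homogeneousSubmodule_one_mul_inf_le (r : ℕ) :
    P 1 * (P r ⊓ I.restrictScalars k) ≤ P (r + 1) ⊓ I.restrictScalars k :=
  le_inf ((mul_le_mul_right inf_le_left _).trans (homogeneousSubmodule_one_mul r).le)
    (mul_le.mpr fun m _ _ hn => I.mul_mem_left m hn.2)

variable {I}

theorem isSocleElem_mk {t : ℕ} {a : MvPolynomial (Fin n) k} (ha : a ∈ P t) (haI : a ∉ I)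
    (hmul : ∀ p ∈ P 1, p * a ∈ I) : IsSocleElem k n I t (Ideal.Quotient.mk I a) := by
  refine ⟨⟨a, ha, rfl⟩, Ideal.Quotient.eq_zero_iff_mem.not.mpr haI, ?_⟩
  rintro _ ⟨p, hp, rfl⟩
  exact Ideal.Quotient.eq_zero_iff_mem.mpr (hmul p hp)

theorem exists_isSocleElem {ℓ : MvPolynomial (Fin n) k} (hℓ : ℓ ∈ P 1) {v : ℕ}
    (hkill : (k ∙ ℓ) * P (v + 1) ≤ I.restrictScalars k)
    (hsurvive : ¬ (k ∙ ℓ) * P v ≤ I.restrictScalars k) : ∃ a, IsSocleElem k n I (v + 1) a := by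
  obtain ⟨a, ha, haI⟩ := SetLike.not_le_iff_exists.mp hsurvive
  refine ⟨_, isSocleElem_mk ?_ haI fun p hp => hkill ?_⟩
  · exact span_singleton_mul_homogeneousSubmodule_le hℓ v ha
  · rw [← homogeneousSubmodule_one_mul, mul_left_comm]
    exact mul_mem_mul hp ha

theorem not_isLevel_of_isSocleElem {t t' : ℕ} {a : MvPolynomial (Fin n) k ⧸ I}
    (ha : IsSocleElem k n I t a) (htt' : t < t') (hpos : 0 < hilbFn k n I t') :
    ¬ IsLevel k n I := by
  refine fun hlevel => hlevel t ⟨t', htt', fun hbot => ?_⟩ a ha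
  rw [hilbFn, hbot, finrank_bot] at hpos
  exact hpos.false

end GradedQuotient

namespace TernaryForms

open MvPolynomial

variable {k : Type*} [Field k]

local notation "R₃" => MvPolynomial (Fin 3) k
local notation "P" => homogeneousSubmodule (Fin 3) k

/-- With `x, y, z` for `X 0, X 1, X 2`: the substitution `z ↦ 0`. Binary forms in `x, y` are kept
inside `k[x, y, z]`, as its image. -/
noncomputable def restrictXY : R₃ →ₐ[k] R₃ := aeval ![X 0, X 1, 0]

local notation "ρ" => AlgHom.toLinearMap (restrictXY (k := k))

noncomputable def binaryForms (r : ℕ) : Submodule k R₃ := (P r).map ρ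

local notation "Q" => binaryForms (k := k)

instance (r : ℕ) : FiniteDimensional k (Q r) :=
  Module.Finite.map _ _

noncomputable def colonZ (r : ℕ) (U : Submodule k R₃) : Submodule k R₃ :=
  P r ⊓ U.comap (LinearMap.mulLeft k (X 2))

theorem mem_colonZ {r : ℕ} {U : Submodule k R₃} {g : R₃} :
    g ∈ colonZ r U ↔ g ∈ P r ∧ X 2 * g ∈ U :=
  Iff.rfl

theorem colonZ_le (r : ℕ) (U : Submodule k R₃) : colonZ r U ≤ P r :=
  inf_le_left

theorem restrictXY_X_two : restrictXY (X 2 : R₃) = 0 := by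
  simp [restrictXY]

theorem span_X_two_mul_le_ker_restrictXY (W : Submodule k R₃) :
    (k ∙ X 2) * W ≤ LinearMap.ker ρ :=
  mul_le.mpr fun m hm _ _ => by
    obtain ⟨c, rfl⟩ := mem_span_singleton.mp hm
    simp [restrictXY_X_two]

theorem restrictXY_monomial (d : Fin 3 →₀ ℕ) (c : k) :
    restrictXY (monomial d c : R₃) = if d 2 = 0 then monomial d c else 0 := by
  rw [restrictXY, aeval_monomial, Finsupp.prod_fintype _ _ fun _ => pow_zero _, Fin.prod_univ_three]
  split_ifs with h
  · simp [h, monomial_eq, Finsupp.prod_fintype _ _ fun _ => pow_zero _, Fin.prod_univ_three]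
  · simp [zero_pow h]

theorem coeff_restrictXY (p : R₃) (d : Fin 3 →₀ ℕ) :
    coeff d (restrictXY p) = if d 2 = 0 then coeff d p else 0 := by
  induction p using MvPolynomial.induction_on' with
  | monomial e c =>
    rw [restrictXY_monomial, coeff_monomial]
    split_ifs with he hd hd <;> simp_all
    rintro rfl
    exact absurd he hd
  | add p q hp hq => simp only [map_add, coeff_add, hp, hq]; split_ifs <;> simp

theorem inf_ker_restrictXY (r : ℕ) : P (r + 1) ⊓ LinearMap.ker ρ = (k ∙ X 2) * P r := by
  apply le_antisymm
  · rintro p ⟨hp, hρp⟩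
    have hmod : p.modMonomial (Finsupp.single 2 1) = 0 := by
      ext n
      by_cases hn : Finsupp.single 2 1 ≤ n
      · exact coeff_modMonomial_of_le p hn
      · have hn2 : n 2 = 0 := by simpa [Finsupp.single_le_iff] using hn
        have := congr_arg (coeff n) (LinearMap.mem_ker.mp hρp)
        rw [AlgHom.toLinearMap_apply, coeff_restrictXY, if_pos hn2] at this
        rw [coeff_modMonomial_of_not_le p hn, this, coeff_zero]
    refine mem_span_singleton_mul.mpr ⟨p.divMonomial (Finsupp.single 2 1), ?_, ?_⟩
    · intro n hn
      rw [coeff_divMonomial] at hn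
      have := hp hn
      rw [map_add, Finsupp.weight_single, Pi.one_apply, smul_eq_mul, mul_one] at this
      omega
    · simpa [hmod] using divMonomial_add_modMonomial_single p 2
  · exact le_inf (span_singleton_mul_homogeneousSubmodule_le (isHomogeneous_X k 2) r)
      (span_X_two_mul_le_ker_restrictXY _)

theorem binaryForms_eq_span (r : ℕ) :
    Q r = span k (Set.range fun i : Fin (r + 1) =>
      (monomial (Finsupp.single 0 (i : ℕ) + Finsupp.single 1 (r - i)) 1 : R₃)) := by
  apply le_antisymm
  · rw [binaryForms, homogeneousSubmodule_eq_finsupp_supported,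
      AddMonoidAlgebra.supported_eq_span_single, map_span, span_le]
    rintro _ ⟨_, ⟨d, hd, rfl⟩, rfl⟩
    change restrictXY (monomial d 1) ∈ _
    rw [restrictXY_monomial]
    split_ifs with h2
    · have hd' : d 0 + d 1 = r := by
        simpa [Finsupp.degree_eq_sum, Fin.sum_univ_three, h2] using hd
      refine subset_span ⟨⟨d 0, by omega⟩, ?_⟩
      have hdecomp : Finsupp.single 0 (d 0) + Finsupp.single 1 (r - d 0) = d := by
        ext j
        fin_cases j <;> simp [h2]
        omega
      simp only [hdecomp]
    · exact zero_mem _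
  · rw [span_le]
    rintro _ ⟨i, rfl⟩
    refine ⟨monomial (Finsupp.single 0 (i : ℕ) + Finsupp.single 1 (r - i)) 1,
      isHomogeneous_monomial 1 ?_, ?_⟩
    · simp only [map_add, Finsupp.degree_single]
      omega
    · simp [restrictXY_monomial]

theorem finrank_binaryForms (r : ℕ) : finrank k (Q r) = r + 1 := by
  have hinj : Function.Injective fun i : Fin (r + 1) =>
      (Finsupp.single 0 (i : ℕ) + Finsupp.single 1 (r - i) : Fin 3 →₀ ℕ) := by
    intro i j hij
    exact Fin.ext (by simpa using congr_arg (· 0) hij)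
  have hli := (basisMonomials (Fin 3) k).linearIndependent.comp _ hinj
  rw [coe_basisMonomials] at hli
  rw [binaryForms_eq_span]
  exact (finrank_span_eq_card hli).trans (Fintype.card_fin _)

theorem binaryForms_one : Q 1 = (k ∙ X 0) ⊔ (k ∙ X 1) := by
  rw [binaryForms, homogeneousSubmodule_one_eq_span_X, map_span, ← Set.range_comp]
  have : (⇑ρ ∘ X : Fin 3 → R₃) = ![X 0, X 1, 0] := by
    ext1 i; fin_cases i <;> simp [restrictXY]
  rw [this, Matrix.range_cons, Matrix.range_cons, Matrix.range_cons, Matrix.range_empty,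
    Set.union_empty, span_union, span_union, span_singleton_eq_bot.mpr rfl, sup_bot_eq]

theorem finrank_lt_finrank_binaryForms_one_mul {V : Submodule k R₃} [FiniteDimensional k V]
    (hV : V ≠ ⊥) : finrank k V < finrank k ↥(Q 1 * V) := by
  rw [binaryForms_one, Submodule.sup_mul]
  exact finrank_lt_finrank_span_X_mul_sup (by decide) hV

theorem inf_ker_restrictXY_of_le {r : ℕ} {U : Submodule k R₃} (hU : U ≤ P (r + 1)) :
    U ⊓ LinearMap.ker ρ = (k ∙ X 2) * colonZ r U := by
  ext x
  constructor
  · rintro ⟨hx, hρx⟩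
    have hx' : x ∈ (k ∙ X 2) * P r := (inf_ker_restrictXY r).le (mem_inf.mpr ⟨hU hx, hρx⟩)
    obtain ⟨g, hg, rfl⟩ := mem_span_singleton_mul.mp hx'
    exact mul_mem_mul (mem_span_singleton_self _) (mem_colonZ.mpr ⟨hg, hx⟩)
  · intro hx
    obtain ⟨g, hg, rfl⟩ := mem_span_singleton_mul.mp hx
    obtain ⟨hg, hgU⟩ := mem_colonZ.mp hg
    exact ⟨hgU, ((inf_ker_restrictXY r).ge (mul_mem_mul (mem_span_singleton_self _) hg)).2⟩

theorem finrank_map_restrictXY_add_finrank_colonZ {r : ℕ} {U : Submodule k R₃}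
    (hU : U ≤ P (r + 1)) : finrank k (U.map ρ) + finrank k (colonZ r U) = finrank k U := by
  have : FiniteDimensional k U := finiteDimensional_of_le hU
  rw [← finrank_map_add_finrank_inf_ker ρ U, inf_ker_restrictXY_of_le hU,
    finrank_span_singleton_mul (X_ne_zero 2)]

theorem finrank_homogeneousSubmodule_succ (r : ℕ) :
    finrank k (P (r + 1)) = finrank k (P r) + (r + 2) := by
  have h := finrank_map_restrictXY_add_finrank_colonZ (le_refl (P (r + 1)))
  have hcolon : colonZ r (P (r + 1)) = P r :=
    inf_eq_left.mpr fun g hg => by simpa [add_comm] using (isHomogeneous_X k 2).mul hg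
  rw [hcolon, ← binaryForms, finrank_binaryForms] at h
  omega

theorem finrank_homogeneousSubmodule_zero : finrank k (P 0) = 1 := by
  rw [homogeneousSubmodule_zero, one_eq_span, finrank_span_singleton one_ne_zero]

theorem finrank_homogeneousSubmodule_one : finrank k (P 1) = 3 := by
  rw [finrank_homogeneousSubmodule_succ, finrank_homogeneousSubmodule_zero]

theorem binaryForms_one_mul (r : ℕ) : Q 1 * Q r = Q (r + 1) := by
  rw [binaryForms, binaryForms, ← Submodule.map_mul, homogeneousSubmodule_one_mul]
  rfl

theorem le_colonZ_iff {r : ℕ} {U V : Submodule k R₃} :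
    V ≤ colonZ r U ↔ V ≤ P r ∧ (k ∙ X 2) * V ≤ U := by
  rw [colonZ, le_inf_iff, mul_eq_map₂, map₂_span_singleton_eq_map, ← map_le_iff_le_comap]
  rfl

theorem span_X_two_mul_colonZ_le (r : ℕ) (U : Submodule k R₃) : (k ∙ X 2) * colonZ r U ≤ U :=
  (le_colonZ_iff.mp le_rfl).2

theorem finrank_binaryForms_one_mul_add_le {U : Submodule k R₃} [FiniteDimensional k U]
    {W : Submodule k R₃} (hW : (k ∙ X 2) * W ≤ P 1 * U) :
    finrank k ↥(Q 1 * U.map ρ) + finrank k W ≤ finrank k ↥(P 1 * U) := by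
  have : FiniteDimensional k ↥(P 1 * U) :=
    Module.Finite.iff_fg.mpr ((homogeneousSubmodule_fg _ _ 1).mul (Module.Finite.iff_fg.mp ‹_›))
  rw [binaryForms, ← Submodule.map_mul, ← finrank_map_add_finrank_inf_ker ρ (P 1 * U),
    ← finrank_span_singleton_mul (X_ne_zero 2) W]
  exact Nat.add_le_add_left (finrank_mono (le_inf hW (span_X_two_mul_le_ker_restrictXY W))) _

theorem finrank_binaryForms_one_mul_add_finrank_le (U : Submodule k R₃) [FiniteDimensional k U] :
    finrank k ↥(Q 1 * U.map ρ) + finrank k U ≤ finrank k ↥(P 1 * U) :=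
  finrank_binaryForms_one_mul_add_le
    (span_singleton_mul_le_homogeneousSubmodule_one_mul (isHomogeneous_X k 2) U)

theorem finrank_binaryForms_one_mul_add_finrank_mul_colonZ_le (r : ℕ) (U : Submodule k R₃)
    [FiniteDimensional k U] :
    finrank k ↥(Q 1 * U.map ρ) + finrank k ↥(P 1 * colonZ r U) ≤ finrank k ↥(P 1 * U) :=
  finrank_binaryForms_one_mul_add_le (by
    rw [mul_left_comm]
    exact mul_le_mul_right (span_X_two_mul_colonZ_le r U) _)

/-- In codimensions: `codim (P₁ U) ≤ codim U` whenever `codim U ≤ r`, i.e. Macaulay's bound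
`h_{r+1} ≤ h_r` for `h_r ≤ r`. -/
theorem add_le_finrank_homogeneousSubmodule_one_mul (r : ℕ) {U : Submodule k R₃} (hU : U ≤ P r)
    (hcodim : finrank k (P r) ≤ finrank k U + r) :
    finrank k U + (r + 2) ≤ finrank k ↥(P 1 * U) := by
  induction r generalizing U with
  | zero =>
    obtain rfl : U = P 0 := eq_of_le_of_finrank_le hU (by omega)
    rw [homogeneousSubmodule_one_mul, finrank_homogeneousSubmodule_one,
      finrank_homogeneousSubmodule_zero]
  | succ r ih =>
    have : FiniteDimensional k U := finiteDimensional_of_le hU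
    have hsplit := finrank_map_restrictXY_add_finrank_colonZ hU
    have hP := finrank_homogeneousSubmodule_succ (k := k) r
    have hcolon : finrank k (colonZ r U) ≤ finrank k (P r) := finrank_mono (colonZ_le r U)
    by_cases hfull : U.map ρ = Q (r + 1)
    · have h := finrank_binaryForms_one_mul_add_finrank_le U
      rw [hfull, binaryForms_one_mul, finrank_binaryForms] at h
      omega
    · have hlt : finrank k (U.map ρ) < r + 2 := by
        have := finrank_lt_finrank_of_lt (lt_of_le_of_ne (map_mono hU) hfull : U.map ρ < Q (r + 1))
        rwa [finrank_binaryForms] at this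
      have hne : U.map ρ ≠ ⊥ := by
        intro h
        rw [h, finrank_bot] at hsplit
        omega
      have h1 := finrank_lt_finrank_binaryForms_one_mul hne
      have h2 := ih (colonZ_le r U) (by omega)
      have h3 := finrank_binaryForms_one_mul_add_finrank_mul_colonZ_le r U
      omega

/-- `Ū` cannot be all binary forms, as then `x Ū + y Ū` alone would make `P₁ U` too big; and if
`dim Ū ≤ r + 1`, Macaulay's bound for `(U : z)` would. -/
theorem finrank_map_restrictXY_of_maximal_growth {r : ℕ} {U : Submodule k R₃}
    (hU : U ≤ P (r + 2)) (hcodim : finrank k U + (r + 3) = finrank k (P (r + 2)))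
    (hgrowth : finrank k ↥(P 1 * U) + (r + 4) ≤ finrank k (P (r + 3)))
    (hbot : U.map ρ ≠ ⊥) : finrank k (U.map ρ) = r + 2 := by
  have : FiniteDimensional k U := finiteDimensional_of_le hU
  have hP₂ : finrank k (P (r + 2)) = finrank k (P (r + 1)) + (r + 3) :=
    finrank_homogeneousSubmodule_succ (r + 1)
  have hP₃ : finrank k (P (r + 3)) = finrank k (P (r + 2)) + (r + 4) :=
    finrank_homogeneousSubmodule_succ (r + 2)
  have hsplit := finrank_map_restrictXY_add_finrank_colonZ hU
  have hUgrowth := finrank_binaryForms_one_mul_add_finrank_le U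
  have hfull : U.map ρ ≠ Q (r + 2) := by
    intro h
    rw [h, binaryForms_one_mul, finrank_binaryForms] at hUgrowth
    omega
  have hlt : finrank k (U.map ρ) < r + 3 := by
    have := finrank_lt_finrank_of_lt (lt_of_le_of_ne (map_mono hU) hfull : U.map ρ < Q (r + 2))
    rwa [finrank_binaryForms] at this
  have hQgrowth := finrank_lt_finrank_binaryForms_one_mul hbot
  have hcolon_growth := finrank_binaryForms_one_mul_add_finrank_mul_colonZ_le (r + 1) U
  by_contra hne
  have := add_le_finrank_homogeneousSubmodule_one_mul (r + 1) (colonZ_le _ U) (by omega)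
  omega

/-- The space `T` of degree-`(r + 2)` forms `g` with `z g ∈ P₁ U` contains both `U` and `ℓ P_{r+1}`,
and `hmul` bounds its dimension by that of `U`. -/
theorem eq_span_singleton_mul_of_span_X_two_mul_le {r : ℕ} {U : Submodule k R₃}
    (hU : U ≤ P (r + 2)) {ℓ : R₃} (hℓ : ℓ ∈ P 1) (hℓ0 : ℓ ≠ 0)
    (hzℓ : (k ∙ X 2) * ((k ∙ ℓ) * P r) ≤ U) (hdim : finrank k U = finrank k (P (r + 1)))
    (hmul : finrank k ↥(P 1 * U) ≤ finrank k ↥(Q 1 * U.map ρ) + finrank k U) :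
    U = (k ∙ ℓ) * P (r + 1) := by
  have : FiniteDimensional k U := finiteDimensional_of_le hU
  have hzU := span_singleton_mul_le_homogeneousSubmodule_one_mul (isHomogeneous_X k 2) U
  have hT := finrank_binaryForms_one_mul_add_le (span_X_two_mul_colonZ_le (r + 2) (P 1 * U))
  set T := colonZ (r + 2) (P 1 * U)
  have : FiniteDimensional k T := finiteDimensional_of_le (colonZ_le _ _)
  have hUT : U ≤ T := le_colonZ_iff.mpr ⟨hU, hzU⟩
  have hℓT : (k ∙ ℓ) * P (r + 1) ≤ T := by
    refine le_colonZ_iff.mpr ⟨span_singleton_mul_homogeneousSubmodule_le hℓ (r + 1), ?_⟩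
    rw [← homogeneousSubmodule_one_mul, mul_left_comm (k ∙ ℓ), mul_left_comm]
    exact mul_le_mul_right hzℓ _
  have hTU : T = U := (eq_of_le_of_finrank_le hUT (by omega)).symm
  exact (eq_of_le_of_finrank_le (hTU ▸ hℓT) (by rw [finrank_span_singleton_mul hℓ0]; omega)).symm

/-- The extremal case of Macaulay's bound: codimension `r + 2` in degree `r + 1` growing to
codimension `r + 3` forces `U = ℓ P_r`. -/
theorem exists_eq_span_singleton_mul_homogeneousSubmodule (r : ℕ) {U : Submodule k R₃}
    (hU : U ≤ P (r + 1)) (hcodim : finrank k U + (r + 2) = finrank k (P (r + 1)))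
    (hgrowth : finrank k ↥(P 1 * U) + (r + 3) ≤ finrank k (P (r + 2))) :
    ∃ ℓ ∈ P 1, ℓ ≠ 0 ∧ U = (k ∙ ℓ) * P r := by
  induction r generalizing U with
  | zero =>
    have : FiniteDimensional k U := finiteDimensional_of_le hU
    rw [finrank_homogeneousSubmodule_one] at hcodim
    obtain ⟨ℓ, hℓU, hℓ0⟩ := exists_mem_ne_zero_of_ne_bot (show U ≠ ⊥ by
      rintro rfl
      rw [finrank_bot] at hcodim
      omega)
    refine ⟨ℓ, hU hℓU, hℓ0, ?_⟩
    rw [homogeneousSubmodule_zero, mul_one]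
    exact (eq_of_le_of_finrank_le ((span_singleton_le_iff_mem _ _).mpr hℓU)
      (by rw [finrank_span_singleton hℓ0]; omega)).symm
  | succ r ih =>
    replace hU : U ≤ P (r + 2) := hU
    replace hcodim : finrank k U + (r + 3) = finrank k (P (r + 2)) := hcodim
    replace hgrowth : finrank k ↥(P 1 * U) + (r + 4) ≤ finrank k (P (r + 3)) := hgrowth
    have : FiniteDimensional k U := finiteDimensional_of_le hU
    have hP₂ : finrank k (P (r + 2)) = finrank k (P (r + 1)) + (r + 3) :=
      finrank_homogeneousSubmodule_succ (r + 1)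
    have hP₃ : finrank k (P (r + 3)) = finrank k (P (r + 2)) + (r + 4) :=
      finrank_homogeneousSubmodule_succ (r + 2)
    by_cases hbot : U.map ρ = ⊥
    · refine ⟨X 2, isHomogeneous_X k 2, X_ne_zero 2, ?_⟩
      rw [← inf_ker_restrictXY]
      refine eq_of_le_of_finrank_le (le_inf hU (LinearMap.le_ker_iff_map.mpr hbot)) ?_
      rw [inf_ker_restrictXY, finrank_span_singleton_mul (X_ne_zero 2)]
      omega
    have hmap := finrank_map_restrictXY_of_maximal_growth hU hcodim hgrowth hbot
    have hsplit := finrank_map_restrictXY_add_finrank_colonZ hU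
    have hQgrowth := finrank_lt_finrank_binaryForms_one_mul hbot
    have hcolon_growth := finrank_binaryForms_one_mul_add_finrank_mul_colonZ_le (r + 1) U
    obtain ⟨ℓ, hℓ, hℓ0, hcolon⟩ := ih (colonZ_le _ U) (by omega) (by omega)
    exact ⟨ℓ, hℓ, hℓ0, eq_span_singleton_mul_of_span_X_two_mul_le hU hℓ hℓ0
      (hcolon ▸ span_X_two_mul_colonZ_le _ U) (by omega) (by omega)⟩

theorem exists_eq_span_singleton_mul_of_hilbFn {I : Ideal R₃} {r : ℕ}
    (h₁ : hilbFn k 3 I (r + 1) = r + 2) (h₂ : r + 3 ≤ hilbFn k 3 I (r + 2)) :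
    ∃ ℓ ∈ P 1, ℓ ≠ 0 ∧ P (r + 1) ⊓ I.restrictScalars k = (k ∙ ℓ) * P r := by
  have e₁ := hilbFn_add_finrank_inf I (r + 1)
  have e₂ := hilbFn_add_finrank_inf I (r + 2)
  have hP : finrank k (P (r + 2)) = finrank k (P (r + 1)) + (r + 3) :=
    finrank_homogeneousSubmodule_succ (r + 1)
  have hgrowth : finrank k ↥(P 1 * (P (r + 1) ⊓ I.restrictScalars k)) ≤
      finrank k ↥(P (r + 2) ⊓ I.restrictScalars k) :=
    finrank_mono (homogeneousSubmodule_one_mul_inf_le I (r + 1))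
  exact exists_eq_span_singleton_mul_homogeneousSubmodule r inf_le_left (by omega) (by omega)

theorem not_span_singleton_mul_le_of_lt_hilbFn {I : Ideal R₃} {ℓ : R₃} (hℓ : ℓ ∈ P 1)
    (hℓ0 : ℓ ≠ 0) {r : ℕ} (h : r + 2 < hilbFn k 3 I (r + 1)) :
    ¬ (k ∙ ℓ) * P r ≤ I.restrictScalars k := by
  intro hle
  have hℓP := finrank_mono (le_inf (span_singleton_mul_homogeneousSubmodule_le hℓ r) hle)
  rw [finrank_span_singleton_mul hℓ0] at hℓP
  have := hilbFn_add_finrank_inf I (r + 1)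
  have := finrank_homogeneousSubmodule_succ (k := k) r
  omega

end TernaryForms

open TernaryForms in
theorem stmt12_general {k : Type*} [Field k] (I : Ideal (MvPolynomial (Fin 3) k))
    (d s : ℕ) (hd : 1 ≤ d) (hs : 2 ≤ s)
    (hplateau : ∀ t, d ≤ t → t ≤ d + s - 1 → hilbFn k 3 I t = d + s)
    (hjump : d + s < hilbFn k 3 I (d + s)) :
    (∃ a, IsSocleElem k 3 I (d + s - 2) a) ∧ ¬ IsLevel k 3 I := by
  obtain ⟨v, hv⟩ : ∃ v, d + s = v + 3 := ⟨d + s - 3, by omega⟩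
  rw [show d + s - 2 = v + 1 by omega]
  have h₁ := hplateau (v + 1) (by omega) (by omega)
  have h₂ := hplateau (v + 2) (by omega) (by omega)
  rw [hv] at h₁ h₂ hjump
  obtain ⟨ℓ, hℓ, hℓ0, hIℓ⟩ := exists_eq_span_singleton_mul_of_hilbFn (r := v + 1) h₂ hjump
  obtain ⟨a, ha⟩ := exists_isSocleElem hℓ (hIℓ ▸ inf_le_right)
    (not_span_singleton_mul_le_of_lt_hilbFn hℓ hℓ0 (by omega))
  exact ⟨⟨a, ha⟩, not_isLevel_of_isSocleElem ha (by omega : v + 1 < v + 3) (by omega)⟩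

/-- If `A = k[x₁,x₂,x₃]/I` is a standard graded Artinian algebra whose
Hilbert function satisfies `h₁ = 3` and, for some `d ≥ 1`, `s ≥ 2`,
`h_d = h_{d+1} = ⋯ = h_{d+s-1} = d + s` and `h_{d+s} > d + s`, then `A` has a nonzero
socle element in degree `d + s - 2`; in particular `A` is not level. -/
theorem stmt12 {k : Type*} [Field k] (I : Ideal (MvPolynomial (Fin 3) k))
    (hhom : IsHomogeneousIdeal k 3 I)
    (hart : FiniteDimensional k (MvPolynomial (Fin 3) k ⧸ I))
    (h1 : hilbFn k 3 I 1 = 3)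
    (d s : ℕ) (hd : 1 ≤ d) (hs : 2 ≤ s)
    (hplateau : ∀ t, d ≤ t → t ≤ d + s - 1 → hilbFn k 3 I t = d + s)
    (hjump : d + s < hilbFn k 3 I (d + s)) :
    (∃ a, IsSocleElem k 3 I (d + s - 2) a) ∧ ¬ IsLevel k 3 I :=
  stmt12_general I d s hd hs hplateau hjump
end
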